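/- Let w ∈ {0,1}^k be a random vector with i.i.d. Bernoulli(θ) entries, θ ∈ (0,1], and let d = k·r. Then for U ∈ ℝ^{a×d}, V ∈ ℝ^{b×d}, Y ∈ ℝ^{a×n}, X ∈ ℝ^{b×n}: E_w ‖Y − (1/θ) U (diag(w) ⊗ I_r) Vᵀ X‖_F² = ‖Y − U Vᵀ X‖_F² + ((1−θ)/θ) Σ_{i=1}^k ‖U_i V_iᵀ X‖_F², where U_i ∈ ℝ^{a×r} and V_i ∈ ℝ^{b×r} are the i-th blocks of r consecutive columns of U and V. -/

import Mathlib

/-!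
Entrywise, the DropBlock residual is `y - θ⁻¹ ∑ᵢ wᵢ mᵢ` with `mᵢ` the corresponding entry of
`Uᵢ Vᵢᵀ X`. Splitting off the first Bernoulli variable, the two branches are the same identity for
`k - 1` blocks, with `y` replaced by `y - θ⁻¹ m₀` (weight `θ`) or kept (weight `1 - θ`); averaging
the two squared biases `(y - θ⁻¹ m₀ - ∑ mᵢ)²` and `(y - ∑ mᵢ)²` produces the extra
`((1 - θ) / θ) m₀²`.
-/

open Finset

section Bernoulli

variable {K : Type*} [Field K] (θ : K)

def bernoulliWeight {k : ℕ} (w : Fin k → Bool) : K :=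
  ∏ i, if w i then θ else 1 - θ

theorem sum_bernoulliWeight_mul_succ {k : ℕ} (f : (Fin (k + 1) → Bool) → K) :
    ∑ w, bernoulliWeight θ w * f w
      = θ * ∑ w, bernoulliWeight θ w * f (Fin.cons true w)
        + (1 - θ) * ∑ w, bernoulliWeight θ w * f (Fin.cons false w) := by
  rw [← (Fin.consEquiv fun _ => Bool).sum_comp, Fintype.sum_prod_type, Fintype.sum_bool]
  simp only [bernoulliWeight, Fin.consEquiv_apply, Fin.prod_univ_succ, Fin.cons_zero, ↓reduceIte,
    Fin.cons_succ, mul_assoc, Bool.false_eq_true, mul_sum]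
  rfl

variable {θ}

theorem sum_bernoulliWeight_mul_sq_sub (hθ : θ ≠ 0) {k : ℕ} (y : K) (m : Fin k → K) :
    ∑ w, bernoulliWeight θ w * (y - 1 / θ * ∑ i, (if w i then 1 else 0) * m i) ^ 2
      = (y - ∑ i, m i) ^ 2 + (1 - θ) / θ * ∑ i, m i ^ 2 := by
  induction k generalizing y with
  | zero => simp [bernoulliWeight]
  | succ k ih =>
    have hkept := ih (y - 1 / θ * m 0) (fun i => m i.succ)
    have hdropped := ih y (fun i => m i.succ)
    simp only [sum_bernoulliWeight_mul_succ, Fin.sum_univ_succ, Fin.cons_zero, Fin.cons_succ,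
      if_true, one_mul, Bool.false_eq_true, if_false, zero_mul, zero_add]
    simp only [mul_add, sub_add_eq_sub_sub] at hkept ⊢
    rw [hkept, hdropped]
    field_simp
    ring

end Bernoulli

section BlockDiagonal

variable {R ι κ m l n : Type*} [CommSemiring R] [Fintype ι] [DecidableEq ι] [Fintype κ]
  [DecidableEq κ] [Fintype l]

theorem mul_diagonal_fst_mul_transpose_mul_apply (d : ι → R) (U : Matrix m (ι × κ) R)
    (V : Matrix l (ι × κ) R) (X : Matrix l n R) (p : m) (q : n) :
    (U * Matrix.diagonal (fun is : ι × κ => d is.1) * V.transpose * X) p q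
      = ∑ i, d i * ∑ s, U p (i, s) * ∑ j, V j (i, s) * X j q := by
  simp only [Matrix.mul_apply, Matrix.diagonal_apply, Matrix.transpose_apply, mul_ite, mul_zero,
    sum_ite_eq', mem_univ, if_true, sum_mul, mul_sum]
  rw [sum_comm, Fintype.sum_prod_type]
  refine sum_congr rfl fun i _ => sum_congr rfl fun s _ => sum_congr rfl fun j _ => ?_
  ring

end BlockDiagonal

theorem stmt2_general (a b n k r : ℕ) (θ : ℝ) (hθ0 : 0 < θ)
    (U : Matrix (Fin a) (Fin k × Fin r) ℝ) (V : Matrix (Fin b) (Fin k × Fin r) ℝ)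
    (Y : Matrix (Fin a) (Fin n) ℝ) (X : Matrix (Fin b) (Fin n) ℝ) :
    ∑ w : Fin k → Bool, (∏ i, if w i then θ else 1 - θ) *
      (∑ p, ∑ q, ((Y - (1 / θ) •
        (U * Matrix.diagonal (fun is : Fin k × Fin r => if w is.1 then (1 : ℝ) else 0)
          * V.transpose * X)) p q) ^ 2)
    = (∑ p, ∑ q, ((Y - U * V.transpose * X) p q) ^ 2)
      + ((1 - θ) / θ) * ∑ i : Fin k,
          ∑ p, ∑ q, (∑ s : Fin r, U p (i, s) * (∑ l, V l (i, s) * X l q)) ^ 2 := by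
  set B : Fin k → Fin a → Fin n → ℝ :=
    fun i p q => ∑ s : Fin r, U p (i, s) * ∑ l, V l (i, s) * X l q
  have hfull (p q) : (Y - U * V.transpose * X) p q = Y p q - ∑ i, B i p q := by
    rw [← Matrix.mul_one U, ← Matrix.diagonal_one, Matrix.sub_apply,
      mul_diagonal_fst_mul_transpose_mul_apply (fun _ => 1)]
    simp only [one_mul, B]
  have hdropped (w : Fin k → Bool) (p q) :
      (Y - (1 / θ) • (U * Matrix.diagonal (fun is : Fin k × Fin r => if w is.1 then (1 : ℝ) else 0)
        * V.transpose * X)) p q = Y p q - 1 / θ * ∑ i, (if w i then 1 else 0) * B i p q := by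
    rw [Matrix.sub_apply, Matrix.smul_apply, smul_eq_mul,
      mul_diagonal_fst_mul_transpose_mul_apply (fun i => if w i then 1 else 0)]
  simp only [hfull, hdropped]
  calc _ = ∑ p, ∑ q, ∑ w : Fin k → Bool,
            bernoulliWeight θ w * (Y p q - 1 / θ * ∑ i, (if w i then 1 else 0) * B i p q) ^ 2 := by
        simp only [mul_sum (ι := Fin a), mul_sum (ι := Fin n)]
        rw [sum_comm]
        exact sum_congr rfl fun p _ => sum_comm
    _ = ∑ p, ∑ q, ((Y p q - ∑ i, B i p q) ^ 2 + (1 - θ) / θ * ∑ i, B i p q ^ 2) := by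
        simp only [sum_bernoulliWeight_mul_sq_sub hθ0.ne']
    _ = (∑ p, ∑ q, (Y p q - ∑ i, B i p q) ^ 2) + (1 - θ) / θ * ∑ i, ∑ p, ∑ q, B i p q ^ 2 := by
        simp only [sum_add_distrib, mul_sum]
        exact congrArg _ ((sum_congr rfl fun p _ => sum_comm).trans sum_comm)

/-- DropBlock deterministic equivalent: for i.i.d. Bernoulli block variables `w`,
the expected stochastic objective equals the deterministic objective plus the
DropBlock regularizer `((1-θ)/θ) Σ_i ‖U_i V_iᵀ X‖_F²`.  Columns are indexed by
`Fin k × Fin r`, so `diag(w) ⊗ I_r` is the diagonal matrix with entry `w i` at `(i,s)`. -/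
theorem stmt2 (a b n k r : ℕ) (θ : ℝ) (hθ0 : 0 < θ) (hθ1 : θ ≤ 1)
    (U : Matrix (Fin a) (Fin k × Fin r) ℝ) (V : Matrix (Fin b) (Fin k × Fin r) ℝ)
    (Y : Matrix (Fin a) (Fin n) ℝ) (X : Matrix (Fin b) (Fin n) ℝ) :
    ∑ w : Fin k → Bool, (∏ i, if w i then θ else 1 - θ) *
      (∑ p, ∑ q, ((Y - (1 / θ) •
        (U * Matrix.diagonal (fun is : Fin k × Fin r => if w is.1 then (1 : ℝ) else 0)
          * V.transpose * X)) p q) ^ 2)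
    = (∑ p, ∑ q, ((Y - U * V.transpose * X) p q) ^ 2)
      + ((1 - θ) / θ) * ∑ i : Fin k,
          ∑ p, ∑ q, (∑ s : Fin r, U p (i, s) * (∑ l, V l (i, s) * X l q)) ^ 2 :=
  stmt2_general a b n k r θ hθ0 U V Y X
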